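/- arXiv:0710.2615 — 2 statements merged into one kernel-verified Lean document; each statement's English description precedes it below -/
import Mathlib

section
/- Let G be a topological group. The family of subgroups U_{X,x} of Aut(F_G), indexed by pairs (X, x) with X a continuous discrete G-set and x ∈ X, satisfies: (i) the intersection of any two such subgroups is again of this form, namely U_{X,x} ∩ U_{Y,y} = U_{X×Y,(x,y)}; (ii) the family is stable under conjugation, namely γ U_{X,x} γ⁻¹ = U_{X, γ_X(x)} for every γ ∈ Aut(F_G); (iii) every subgroup of Aut(F_G) containing some U_{X,x} is again of the form U_{Y,y} for some continuous discrete G-set Y and y ∈ Y. Consequently, there is a group topology on Aut(F_G) in which these subgroups are exactly the open subgroups and form a fundamental system of neighborhoods of the identity. -/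
open CategoryTheory

universe u

namespace ProdiscreteCompletion

variable (G : Type u) [Group G] [TopologicalSpace G]

/-- The category `G-Set` of continuous discrete `G`-sets: `G`-sets in which the stabilizer of
every point is an open subgroup of `G` (equivalently, the action map is continuous for the
discrete topology on the set). -/
abbrev ContGSet :=
  ObjectProperty.FullSubcategory (fun X : Action (Type u) G =>
    ∀ x : X.V, IsOpen {g : G | X.ρ g x = x})

/-- The forgetful functor `F_G : G-Set ⥤ Set` on continuous discrete `G`-sets. -/
abbrev forgetContGSet : ContGSet G ⥤ Type u :=
  ObjectProperty.ι _ ⋙ Action.forget _ _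

variable {G}

/-- For `g : G`, the natural automorphism of the forgetful functor whose component at each
continuous discrete `G`-set `X` is the action of `g` on `X`. -/
def iotaIso (g : G) : forgetContGSet G ≅ forgetContGSet G :=
  NatIso.ofComponents
    (fun X => Equiv.toIso
      { toFun := X.obj.ρ g
        invFun := X.obj.ρ g⁻¹
        left_inv := fun x => by
          have h : X.obj.ρ (g⁻¹ * g) x = X.obj.ρ g⁻¹ (X.obj.ρ g x) :=
            types_congr_hom (X.obj.ρ.map_mul g⁻¹ g) x
          rw [inv_mul_cancel] at h
          rw [map_one] at h
          exact h.symm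
        right_inv := fun x => by
          have h : X.obj.ρ (g * g⁻¹) x = X.obj.ρ g (X.obj.ρ g⁻¹ x) :=
            types_congr_hom (X.obj.ρ.map_mul g g⁻¹) x
          rw [mul_inv_cancel] at h
          rw [map_one] at h
          exact h.symm })
    (fun {X Y} f => ConcreteCategory.hom_ext _ _ fun x => (types_congr_hom (f.hom.comm g) x).symm)

variable (G)

/-- The canonical group homomorphism `ι_G : G → G^∧ = Aut (F_G)` sending `g ∈ G` to the
natural automorphism of the forgetful functor acting by `g` on each continuous discrete
`G`-set. -/
def iota : G →* Aut (forgetContGSet G) where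
  toFun := iotaIso
  map_one' := by
    ext X x
    show (iotaIso 1).hom.app X x = _
    simp [iotaIso]
    rfl
  map_mul' g₁ g₂ := by
    ext X x
    have h : X.obj.ρ (g₁ * g₂) x = X.obj.ρ g₁ (X.obj.ρ g₂ x) :=
      types_congr_hom (X.obj.ρ.map_mul g₁ g₂) x
    exact h

variable {G}

/-- The stabilizer subgroup `U_{X,x} ⊆ Aut (F_G)` of a point `x` of a continuous discrete
`G`-set `X`. -/
def USub (X : ContGSet G) (x : X.obj.V) : Subgroup (Aut (forgetContGSet G)) where
  carrier := {γ | γ.hom.app X x = x}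
  one_mem' := rfl
  mul_mem' := by
    intro γ δ hγ hδ
    show (γ * δ).hom.app X x = x
    rw [Aut.Aut_mul_def]
    show γ.hom.app X (δ.hom.app X x) = x
    rw [show δ.hom.app X x = x from hδ]
    exact hγ
  inv_mem' := by
    intro γ hγ
    show γ⁻¹.hom.app X x = x
    conv_lhs => rw [← show γ.hom.app X x = x from hγ]
    rw [Aut.Aut_inv_def]
    exact types_congr_hom (congrArg (fun τ : forgetContGSet G ⟶ forgetContGSet G => τ.app X)
      γ.hom_inv_id) x


variable {G : Type u} [Group G] [TopologicalSpace G]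

/-- The product of two continuous discrete `G`-sets, with the componentwise action. -/
def prodGSet (X Y : ContGSet G) : ContGSet G where
  obj :=
    { V := X.obj.V × Y.obj.V
      ρ :=
        { toFun := fun g => TypeCat.ofHom fun p => (X.obj.ρ g p.1, Y.obj.ρ g p.2)
          map_one' := by
            refine ConcreteCategory.hom_ext _ _ fun p => ?_
            simp
          map_mul' := fun g h => by
            refine ConcreteCategory.hom_ext _ _ fun p => ?_
            exact Prod.ext (types_congr_hom (X.obj.ρ.map_mul g h) p.1)
              (types_congr_hom (Y.obj.ρ.map_mul g h) p.2) } }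
  property := fun p => by
    show IsOpen {g : G | (X.obj.ρ g p.1, Y.obj.ρ g p.2) = p}
    have h : {g : G | (X.obj.ρ g p.1, Y.obj.ρ g p.2) = p} =
        {g : G | X.obj.ρ g p.1 = p.1} ∩ {g : G | Y.obj.ρ g p.2 = p.2} := by
      ext g
      simp [Prod.ext_iff]
    rw [h]
    exact (X.property p.1).inter (Y.property p.2)

end ProdiscreteCompletion

/-!
Naturality with respect to the inclusion of an orbit `G • x ⊆ X` shows that every
`γ ∈ Aut(F_G)` moves `x` inside its orbit, so `γ_X x = g • x` for some `g : G`. If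
`U_{X,x} ≤ K`, let `K'` be the preimage of `K` under `ι : G → Aut(F_G)`; it contains the stabilizer
of `x`, hence is open. Choosing `g` for the point `(x, K')` of `X × G ⧸ K'` gives
`γ ∈ K ↔ ι g ∈ K ↔ g ∈ K' ↔ γ ∈ U_{G ⧸ K', K'}`. Stability under products and conjugation
follows from naturality, and a family of subgroups closed under `⊓` and conjugation is a basis
of neighbourhoods of `1` for a group topology.
-/

namespace Subgroup

variable {Γ : Type*} [Group Γ] (P : Subgroup Γ → Prop)

@[reducible]
def groupFilterBasis (nonempty : ∃ K, P K) (inf_mem : ∀ K L, P K → P L → P (K ⊓ L))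
    (map_conj_mem : ∀ γ K, P K → P (K.map (MulAut.conj γ).toMonoidHom)) : GroupFilterBasis Γ where
  sets := SetLike.coe '' {K | P K}
  nonempty := nonempty.elim fun K hK => ⟨K, K, hK, rfl⟩
  inter_sets := by
    rintro _ _ ⟨K, hK, rfl⟩ ⟨L, hL, rfl⟩
    exact ⟨K ⊓ L, ⟨K ⊓ L, inf_mem K L hK hL, rfl⟩, subset_rfl⟩
  one' := by
    rintro _ ⟨K, -, rfl⟩
    exact K.one_mem
  mul' := by
    rintro _ ⟨K, hK, rfl⟩
    exact ⟨K, ⟨K, hK, rfl⟩, by rintro _ ⟨a, ha, b, hb, rfl⟩; exact K.mul_mem ha hb⟩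
  inv' := by
    rintro _ ⟨K, hK, rfl⟩
    exact ⟨K, ⟨K, hK, rfl⟩, fun a => K.inv_mem⟩
  conj' := by
    rintro γ _ ⟨K, hK, rfl⟩
    refine ⟨_, ⟨_, map_conj_mem γ⁻¹ K hK, rfl⟩, ?_⟩
    rintro _ ⟨a, ha, rfl⟩
    simpa [mul_assoc] using ha

variable {P} {nonempty : ∃ K, P K} {inf_mem : ∀ K L, P K → P L → P (K ⊓ L)}
    {map_conj_mem : ∀ γ K, P K → P (K.map (MulAut.conj γ).toMonoidHom)}

theorem groupFilterBasis_nhds_one_hasBasis :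
    (@nhds Γ (groupFilterBasis P nonempty inf_mem map_conj_mem).topology 1).HasBasis P
      SetLike.coe := by
  have := (groupFilterBasis P nonempty inf_mem map_conj_mem).nhds_one_hasBasis
  exact ⟨fun s => this.mem_iff.trans ⟨fun ⟨_, ⟨K, hK, rfl⟩, hs⟩ => ⟨K, hK, hs⟩,
    fun ⟨K, hK, hs⟩ => ⟨K, ⟨K, hK, rfl⟩, hs⟩⟩⟩

theorem groupFilterBasis_isOpen_iff (upward : ∀ K L, P K → K ≤ L → P L) (K : Subgroup Γ) :
    @IsOpen Γ (groupFilterBasis P nonempty inf_mem map_conj_mem).topology K ↔ P K := by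
  let _ : TopologicalSpace Γ := (groupFilterBasis P nonempty inf_mem map_conj_mem).topology
  refine ⟨fun hK => ?_, fun hK => K.isOpen_of_mem_nhds (g := 1) ?_⟩
  · obtain ⟨L, hL, hLK⟩ := groupFilterBasis_nhds_one_hasBasis.mem_iff.mp (hK.mem_nhds K.one_mem)
    exact upward L K hL hLK
  · exact groupFilterBasis_nhds_one_hasBasis.mem_of_mem hK

end Subgroup

namespace ProdiscreteCompletion

variable {G : Type u} [Group G] [TopologicalSpace G]

namespace ContGSet

instance (X : ContGSet G) : MulAction G X.obj.V := Action.instMulAction X.obj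

def ofMulAction (V : Type u) [MulAction G V]
    (isOpen_stabilizer : ∀ v : V, IsOpen (MulAction.stabilizer G v : Set G)) : ContGSet G :=
  ⟨Action.ofMulAction G V, isOpen_stabilizer⟩

def orbit (X : ContGSet G) (x : X.obj.V) : ContGSet G :=
  ofMulAction (MulAction.orbit G x) fun z => by
    convert X.property z.1 using 1
    ext g
    exact Subtype.ext_iff

def orbitι (X : ContGSet G) (x : X.obj.V) : orbit X x ⟶ X :=
  ⟨{ hom := TypeCat.ofHom Subtype.val, comm := fun _ => rfl }⟩

def quotient [IsTopologicalGroup G] (K : Subgroup G) (hK : IsOpen (K : Set G)) : ContGSet G :=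
  have := QuotientGroup.discreteTopology hK
  ofMulAction (G ⧸ K) (stabilizer_isOpen G)

def point : ContGSet G :=
  ofMulAction PUnit fun v => by
    rw [(Subgroup.eq_top_iff' (MulAction.stabilizer G v)).mpr fun g => Subsingleton.elim (g • v) v]
    exact isOpen_univ

def fst (X Y : ContGSet G) : prodGSet X Y ⟶ X :=
  ⟨{ hom := TypeCat.ofHom Prod.fst, comm := fun _ => rfl }⟩

def snd (X Y : ContGSet G) : prodGSet X Y ⟶ Y :=
  ⟨{ hom := TypeCat.ofHom Prod.snd, comm := fun _ => rfl }⟩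

end ContGSet

open ContGSet

section Components

variable (γ δ : Aut (forgetContGSet G)) {X : ContGSet G}

lemma mul_hom_app_apply (z : X.obj.V) : (γ * δ).hom.app X z = γ.hom.app X (δ.hom.app X z) :=
  rfl

@[simp]
lemma inv_hom_app_hom_app_apply (z : X.obj.V) : γ⁻¹.hom.app X (γ.hom.app X z) = z :=
  Iso.hom_inv_id_app_apply γ X z

@[simp]
lemma hom_app_inv_hom_app_apply (z : X.obj.V) : γ.hom.app X (γ⁻¹.hom.app X z) = z :=
  Iso.inv_hom_id_app_apply γ X z

lemma hom_app_injective : Function.Injective (γ.hom.app X) :=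
  Function.LeftInverse.injective (inv_hom_app_hom_app_apply γ)

lemma hom_app_naturality {Y : ContGSet G} (f : X ⟶ Y) (z : X.obj.V) :
    γ.hom.app Y (f.hom.hom z) = f.hom.hom (γ.hom.app X z) :=
  NatTrans.naturality_apply γ.hom f z

lemma hom_app_prod {Y : ContGSet G} (p : (prodGSet X Y).obj.V) :
    γ.hom.app (prodGSet X Y) p = (γ.hom.app X p.1, γ.hom.app Y p.2) :=
  Prod.ext (hom_app_naturality γ (fst X Y) p).symm (hom_app_naturality γ (snd X Y) p).symm

lemma hom_app_mem_orbit (x : X.obj.V) : γ.hom.app X x ∈ MulAction.orbit G x := by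
  have h := hom_app_naturality γ (orbitι X x) ⟨x, MulAction.mem_orbit_self x⟩
  exact h ▸ (γ.hom.app (orbit X x) ⟨x, MulAction.mem_orbit_self x⟩).2

lemma iota_hom_app (g : G) (z : X.obj.V) : (iota G g).hom.app X z = g • z :=
  rfl

end Components

@[simp]
lemma mem_USub {X : ContGSet G} {x : X.obj.V} {γ : Aut (forgetContGSet G)} :
    γ ∈ USub X x ↔ γ.hom.app X x = x :=
  Iff.rfl

lemma USub_inf_USub (X Y : ContGSet G) (x : X.obj.V) (y : Y.obj.V) :
    USub X x ⊓ USub Y y = USub (prodGSet X Y) (x, y) := by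
  ext γ
  change γ.hom.app X x = x ∧ γ.hom.app Y y = y ↔ γ.hom.app (prodGSet X Y) (x, y) = (x, y)
  exact Prod.ext_iff.symm.trans (Eq.congr_left (z := (x, y)) (hom_app_prod γ (x, y)).symm)

lemma map_conj_USub (X : ContGSet G) (x : X.obj.V) (γ : Aut (forgetContGSet G)) :
    (USub X x).map (MulAut.conj γ).toMonoidHom = USub X (γ.hom.app X x) := by
  ext η
  rw [Subgroup.mem_map_equiv]
  change γ⁻¹.hom.app X (η.hom.app X (γ.hom.app X x)) = x ↔
    η.hom.app X (γ.hom.app X x) = γ.hom.app X x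
  exact (hom_app_injective γ).eq_iff.symm.trans (Eq.congr_left (hom_app_inv_hom_app_apply γ _))

lemma comap_iota_USub (X : ContGSet G) (x : X.obj.V) :
    (USub X x).comap (iota G) = MulAction.stabilizer G x :=
  rfl

lemma exists_eq_USub_of_USub_le [IsTopologicalGroup G] {X : ContGSet G} {x : X.obj.V}
    {K : Subgroup (Aut (forgetContGSet G))} (hK : USub X x ≤ K) :
    ∃ (Y : ContGSet G) (y : Y.obj.V), K = USub Y y := by
  set K' := K.comap (iota G)
  have hK' : IsOpen (K' : Set G) :=
    Subgroup.isOpen_mono (comap_iota_USub X x ▸ Subgroup.comap_mono hK) (X.property x)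
  let Y := quotient K' hK'
  let y : Y.obj.V := ((1 : G) : G ⧸ K')
  refine ⟨Y, y, ?_⟩
  ext γ
  obtain ⟨g, hg⟩ := hom_app_mem_orbit γ (X := prodGSet X Y) (x, y)
  have hgx : g • x = γ.hom.app X x := congrArg Prod.fst (hg.trans (hom_app_prod γ (x, y)))
  have hgy : g • y = γ.hom.app Y y := congrArg Prod.snd (hg.trans (hom_app_prod γ (x, y)))
  have hfix : (iota G g)⁻¹ * γ ∈ USub X x := by
    rw [mem_USub, mul_hom_app_apply, ← hgx, ← map_inv, iota_hom_app, inv_smul_smul]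
  calc γ ∈ K ↔ iota G g * ((iota G g)⁻¹ * γ) ∈ K := by rw [mul_inv_cancel_left]
    _ ↔ iota G g ∈ K := K.mul_mem_cancel_right (hK hfix)
    _ ↔ g ∈ MulAction.stabilizer G ((1 : G) : G ⧸ K') := by rw [MulAction.stabilizer_quotient]; rfl
    _ ↔ γ ∈ USub Y y := by rw [MulAction.mem_stabilizer_iff, mem_USub, ← hgy]; rfl

def IsStabilizerSubgroup (K : Subgroup (Aut (forgetContGSet G))) : Prop :=
  ∃ (X : ContGSet G) (x : X.obj.V), K = USub X x

lemma isStabilizerSubgroup_USub (X : ContGSet G) (x : X.obj.V) :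
    IsStabilizerSubgroup (USub X x) :=
  ⟨X, x, rfl⟩

namespace IsStabilizerSubgroup

lemma inf {K L : Subgroup (Aut (forgetContGSet G))} :
    IsStabilizerSubgroup K → IsStabilizerSubgroup L → IsStabilizerSubgroup (K ⊓ L) := by
  rintro ⟨X, x, rfl⟩ ⟨Y, y, rfl⟩
  exact ⟨prodGSet X Y, (x, y), USub_inf_USub X Y x y⟩

lemma map_conj {K : Subgroup (Aut (forgetContGSet G))} (γ : Aut (forgetContGSet G)) :
    IsStabilizerSubgroup K → IsStabilizerSubgroup (K.map (MulAut.conj γ).toMonoidHom) := by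
  rintro ⟨X, x, rfl⟩
  exact ⟨X, γ.hom.app X x, map_conj_USub X x γ⟩

lemma mono [IsTopologicalGroup G] {K L : Subgroup (Aut (forgetContGSet G))} :
    IsStabilizerSubgroup K → K ≤ L → IsStabilizerSubgroup L := by
  rintro ⟨X, x, rfl⟩
  exact exists_eq_USub_of_USub_le

end IsStabilizerSubgroup

variable (G) in
@[reducible]
def stabilizerFilterBasis : GroupFilterBasis (Aut (forgetContGSet G)) :=
  Subgroup.groupFilterBasis IsStabilizerSubgroup
    ⟨_, isStabilizerSubgroup_USub point PUnit.unit⟩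
    (fun _ _ => .inf) fun γ _ => .map_conj γ

/-- Proposition `P:topology` of the paper.  For a topological group `G`, the
stabilizer subgroups `U_{X,x} ⊆ Aut (F_G)` (for `X` a continuous discrete `G`-set and
`x ∈ X`) are closed under intersection (via products), closed under conjugation, and every
subgroup containing some `U_{X,x}` is again of this form; consequently they are exactly the
open subgroups of a group topology on `Aut (F_G)`, for which they form a fundamental system of
neighborhoods of the identity. -/
theorem stabilizer_subgroups_form_prodiscrete_topology
    (G : Type u) [Group G] [TopologicalSpace G] [IsTopologicalGroup G] :
    (∀ (X Y : ContGSet G) (x : X.obj.V) (y : Y.obj.V),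
      USub X x ⊓ USub Y y = USub (prodGSet X Y) (x, y)) ∧
    (∀ (X : ContGSet G) (x : X.obj.V) (γ : Aut (forgetContGSet G)),
      Subgroup.map (MulAut.conj γ).toMonoidHom (USub X x) = USub X (γ.hom.app X x)) ∧
    (∀ (X : ContGSet G) (x : X.obj.V) (K : Subgroup (Aut (forgetContGSet G))),
      USub X x ≤ K → ∃ (Y : ContGSet G) (y : Y.obj.V), K = USub Y y) ∧
    (∃ t : TopologicalSpace (Aut (forgetContGSet G)),
      @IsTopologicalGroup (Aut (forgetContGSet G)) t _ ∧
      (∀ K : Subgroup (Aut (forgetContGSet G)),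
        @IsOpen _ t (K : Set (Aut (forgetContGSet G))) ↔
          ∃ (X : ContGSet G) (x : X.obj.V), K = USub X x) ∧
      (@nhds _ t 1).HasBasis
        (fun K : Subgroup (Aut (forgetContGSet G)) =>
          ∃ (X : ContGSet G) (x : X.obj.V), K = USub X x)
        (fun K => (K : Set (Aut (forgetContGSet G))))) :=
  ⟨USub_inf_USub, map_conj_USub, fun _ _ _ => exists_eq_USub_of_USub_le,
    (stabilizerFilterBasis G).topology, (stabilizerFilterBasis G).isTopologicalGroup,
    Subgroup.groupFilterBasis_isOpen_iff fun _ _ => IsStabilizerSubgroup.mono,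
    Subgroup.groupFilterBasis_nhds_one_hasBasis⟩

end ProdiscreteCompletion
end

section
/- Let f : Y → X be a covering map of topological spaces all of whose fibers are finite. If X is metrizable, then Y is metrizable. -/
/-!
Choose a partition of unity `ρ` on the closed set `range f` subordinate to evenly covered open
sets `U i`, with trivializations `f ⁻¹' U i ≃ U i × F i`. Cutting each `ρ i ∘ f` down to the
sheets over `U i` gives a locally finite family of continuous functions on `Y` indexed by
`Σ i, F i`, hence a continuous map `Ψ : Y → ℓ^∞(Σ i, F i)`. Every point lies where some
coordinate of `Ψ` is nonzero, and `f` is injective on each such set (it lies in a single sheet),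
so `y ↦ (f y, Ψ y)` embeds `Y` into the metrizable space `X × ℓ^∞`.
-/

open Topology Set Filter Function Bundle
open scoped ENNReal

theorem LocallyFinite.sigma {X ι : Type*} [TopologicalSpace X] {κ : ι → Type*}
    {s : ∀ i, κ i → Set X} (hs : LocallyFinite fun i => ⋃ j, s i j)
    (hsi : ∀ i, LocallyFinite (s i)) :
    LocallyFinite fun k : (Σ i, κ i) => s k.1 k.2 := by
  intro x
  obtain ⟨N, hN, hNfin⟩ := hs x
  choose M hM hMfin using fun i => hsi i x
  refine ⟨N ∩ ⋂ i ∈ {i | ((⋃ j, s i j) ∩ N).Nonempty}, M i,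
    inter_mem hN ((biInter_mem hNfin).2 fun i _ => hM i), ?_⟩
  refine (hNfin.biUnion fun i _ => (hMfin i).image (Sigma.mk i)).subset ?_
  rintro ⟨i, j⟩ ⟨y, hyj, hyN, hyM⟩
  have hi : ((⋃ j, s i j) ∩ N).Nonempty := ⟨y, mem_iUnion.2 ⟨j, hyj⟩, hyN⟩
  exact mem_biUnion hi ⟨j, ⟨y, hyj, mem_iInter₂.1 hyM i hi⟩, rfl⟩

theorem LocallyFinite.exists_continuous_lp_infty {Y κ E : Type*} [TopologicalSpace Y]
    [NormedAddCommGroup E] {φ : κ → Y → E} (hφ : LocallyFinite fun k => support (φ k))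
    (hcont : ∀ k, Continuous (φ k)) :
    ∃ Φ : Y → lp (fun _ : κ => E) ∞, Continuous Φ ∧ ∀ y k, Φ y k = φ k y := by
  classical
  have hmem (y : Y) : Memℓp (fun k => φ k y) ∞ :=
    (memℓp_zero (hφ.point_finite y)).of_exponent_ge le_top
  refine ⟨fun y => ⟨fun k => φ k y, hmem y⟩, continuous_iff_continuousAt.2 fun y₀ => ?_,
    fun _ _ => rfl⟩
  obtain ⟨N, hN, hfin⟩ := hφ y₀
  have hsum : Continuous fun y => ∑ k ∈ hfin.toFinset, lp.single ∞ k (φ k y) :=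
    continuous_finsetSum _ fun k _ => (lp.isometry_single k).continuous.comp (hcont k)
  refine hsum.continuousAt.congr (eventually_of_mem hN fun y hy => ?_)
  ext k
  simp only [lp.coeFn_sum, Finset.sum_apply, lp.coeFn_single, Finset.sum_pi_single,
    Set.Finite.mem_toFinset]
  split_ifs with hk
  · rfl
  · exact (not_not.1 fun h => hk ⟨y, h, hy⟩).symm

theorem IsCoveringMap.isClosed_range {X Y : Type*} [TopologicalSpace X] [TopologicalSpace Y]
    {f : Y → X} (hf : IsCoveringMap f) : IsClosed (range f) := by
  refine isOpen_compl_iff.1 (isOpen_iff_forall_mem_open.2 fun x hx => ?_)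
  obtain ⟨-, U, hxU, hU, -, H, -⟩ := hf x
  refine ⟨U, ?_, hU, hxU⟩
  rintro _ hyU ⟨y, rfl⟩
  exact hx ⟨_, (H ⟨y, hyU⟩).2.2⟩

theorem isEmbedding_prodMk_of_injOn {X Y Z : Type*} [TopologicalSpace X] [TopologicalSpace Y]
    [TopologicalSpace Z] {f : Y → X} {g : Y → Z} (hf : Continuous f) (hfo : IsOpenMap f)
    (hg : Continuous g) (hinj : ∀ y, ∃ O, IsOpen O ∧ g y ∈ O ∧ InjOn f (g ⁻¹' O)) :
    IsEmbedding fun y => (f y, g y) := by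
  refine ⟨isInducing_iff_nhds.2 fun y => le_antisymm ((hf.prodMk hg).tendsto y).le_comap ?_, ?_⟩
  · obtain ⟨O, hO, hyO, hinjO⟩ := hinj y
    intro V hV
    obtain ⟨W, hWV, hW, hyW⟩ :=
      mem_nhds_iff.1 (inter_mem hV ((hO.preimage hg).mem_nhds hyO))
    refine mem_comap.2 ⟨(f '' W) ×ˢ O,
      ((hfo W hW).prod hO).mem_nhds (mk_mem_prod (mem_image_of_mem f hyW) hyO), ?_⟩
    rintro z ⟨⟨w, hw, hwz⟩, hzO⟩
    exact hinjO (hWV hw).2 hzO hwz ▸ (hWV hw).1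
  · intro y₁ y₂ h
    obtain ⟨O, -, hO, hinjO⟩ := hinj y₁
    obtain ⟨hf₁₂, hg₁₂⟩ := Prod.mk.inj h
    exact hinjO hO (by rwa [mem_preimage, ← hg₁₂]) hf₁₂

section SheetLift

variable {X Y ι : Type*} [TopologicalSpace X] [TopologicalSpace Y] {F : ι → Type*}
  [∀ i, TopologicalSpace (F i)] {f : Y → X}

open Classical in
/-- Off `(t i).source` the sheet index `(t i y).2` is a junk value, but there `ρ i (f y) = 0`
as soon as `tsupport (ρ i) ⊆ (t i).baseSet`. -/
noncomputable def sheetLift (t : ∀ i, Trivialization (F i) f) (ρ : ι → X → ℝ) (k : Σ i, F i)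
    (y : Y) : ℝ :=
  ρ k.1 (f y) * if (t k.1 y).2 = k.2 then 1 else 0

variable (t : ∀ i, Trivialization (F i) f) {ρ : ι → X → ℝ}

theorem sheetLift_ne_zero {i : ι} {j : F i} {y : Y} :
    sheetLift t ρ ⟨i, j⟩ y ≠ 0 ↔ ρ i (f y) ≠ 0 ∧ (t i y).2 = j := by
  simp [sheetLift, and_comm]

theorem continuous_sheetLift [∀ i, DiscreteTopology (F i)] (hf : Continuous f)
    (hρ : ∀ i, Continuous (ρ i)) (hsupp : ∀ i, tsupport (ρ i) ⊆ (t i).baseSet)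
    (k : Σ i, F i) : Continuous (sheetLift t ρ k) := by
  classical
  obtain ⟨i, j⟩ := k
  refine ContinuousOn.continuous_of_tsupport_subset (s := (t i).source) ?_
    (t i).open_source ?_
  · exact ((hρ i).comp hf).continuousOn.mul
      ((continuous_of_discreteTopology (f := fun a : F i => if a = j then (1 : ℝ) else 0)
        ).comp_continuousOn (continuous_snd.comp_continuousOn (t i).continuousOn_toFun))
  · calc tsupport (sheetLift t ρ ⟨i, j⟩) ⊆ tsupport (ρ i ∘ f) := tsupport_mul_subset_left
      _ ⊆ f ⁻¹' tsupport (ρ i) := tsupport_comp_subset_preimage _ hf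
      _ ⊆ f ⁻¹' (t i).baseSet := preimage_mono (hsupp i)
      _ = (t i).source := (t i).source_eq.symm

theorem eventually_sheetLift_eq_zero [∀ i, DiscreteTopology (F i)] (hf : Continuous f)
    (hsupp : ∀ i, tsupport (ρ i) ⊆ (t i).baseSet) (i : ι) (y₀ : Y) :
    ∀ᶠ y in 𝓝 y₀, ∀ j, j ≠ (t i y₀).2 → sheetLift t ρ ⟨i, j⟩ y = 0 := by
  by_cases hy₀ : f y₀ ∈ tsupport (ρ i)
  · have hsrc : y₀ ∈ (t i).source := (t i).mem_source.2 (hsupp i hy₀)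
    have hσ : ContinuousAt (fun y => (t i y).2) y₀ :=
      continuous_snd.continuousAt.comp ((t i).continuousOn_toFun.continuousAt
        ((t i).open_source.mem_nhds hsrc))
    filter_upwards [hσ.eventually_mem ((isOpen_discrete {(t i y₀).2}).mem_nhds rfl)]
      with y hy j hj
    by_contra h
    exact hj (((sheetLift_ne_zero t).1 h).2.symm.trans hy)
  · have hρ₀ := notMem_tsupport_iff_eventuallyEq.1 hy₀
    filter_upwards [hf.continuousAt.tendsto.eventually hρ₀] with y hy j _
    simp [sheetLift, hy]

theorem locallyFinite_support_sheetLift [∀ i, DiscreteTopology (F i)] (hf : Continuous f)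
    (hsupp : ∀ i, tsupport (ρ i) ⊆ (t i).baseSet) (hρ : LocallyFinite fun i => support (ρ i)) :
    LocallyFinite fun k => support (sheetLift t ρ k) := by
  refine LocallyFinite.sigma (s := fun i j => support (sheetLift t ρ ⟨i, j⟩)) ?_
    fun i y₀ => ?_
  · refine (hρ.preimage_continuous hf).subset fun i => iUnion_subset fun j y hy => ?_
    exact ((sheetLift_ne_zero t).1 hy).1
  · refine ⟨_, eventually_sheetLift_eq_zero t hf hsupp i y₀,
      (finite_singleton (t i y₀).2).subset ?_⟩
    rintro j ⟨y, hy, hy₀⟩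
    by_contra hj
    exact hy (hy₀ j hj)

theorem injOn_sheetLift_ne_zero (hsupp : ∀ i, tsupport (ρ i) ⊆ (t i).baseSet) (k : Σ i, F i) :
    InjOn f {y | sheetLift t ρ k y ≠ 0} := by
  obtain ⟨i, j⟩ := k
  intro y₁ hy₁ y₂ hy₂ h
  rw [mem_ofPred, sheetLift_ne_zero] at hy₁ hy₂
  have hsrc {y : Y} (hy : ρ i (f y) ≠ 0) : y ∈ (t i).source :=
    (t i).mem_source.2 (hsupp i (subset_tsupport _ hy))
  refine (t i).injOn (hsrc hy₁.1) (hsrc hy₂.1) ?_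
  rw [Trivialization.coe_coe, ← (t i).mk_proj_snd (hsrc hy₁.1),
    ← (t i).mk_proj_snd (hsrc hy₂.1), h, hy₁.2, hy₂.2]

end SheetLift

theorem metrizableSpace_of_finite_coveringMap_general
    {X Y : Type*} [TopologicalSpace X] [TopologicalSpace Y]
    (f : Y → X) (hf : IsCoveringMap f)
    [TopologicalSpace.MetrizableSpace X] :
    TopologicalSpace.MetrizableSpace Y := by
  let := TopologicalSpace.metrizableSpaceMetric X
  have (y : Y) : Nonempty (f ⁻¹' {f y}) := ⟨⟨y, rfl⟩⟩
  have (y : Y) := (hf (f y)).discreteTopology_fiber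
  let t (y : Y) := (hf (f y)).toTrivialization
  obtain ⟨ρ, hsupp⟩ := PartitionOfUnity.exists_isSubordinate hf.isClosed_range
    (fun y => (t y).baseSet) (fun y => (t y).open_baseSet)
    (range_subset_iff.2 fun y => mem_iUnion.2 ⟨y, (hf (f y)).mem_toTrivialization_baseSet⟩)
  obtain ⟨Ψ, hΨ, hΨ_apply⟩ :=
    (locallyFinite_support_sheetLift t hf.continuous hsupp ρ.locallyFinite
      ).exists_continuous_lp_infty
      (continuous_sheetLift t hf.continuous (fun i => (ρ i).continuous) hsupp)
  refine (isEmbedding_prodMk_of_injOn hf.continuous hf.isOpenMap hΨ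
    fun y => ?_).metrizableSpace
  obtain ⟨i, hi⟩ := ρ.exists_pos (mem_range_self y)
  refine ⟨{v | v ⟨i, (t i y).2⟩ ≠ 0},
    isOpen_ne_fun (lp.lipschitzWith_one_eval ∞ _).continuous continuous_const, ?_, ?_⟩
  · simpa [hΨ_apply, sheetLift_ne_zero] using hi.ne'
  · simpa [preimage, hΨ_apply] using injOn_sheetLift_ne_zero t hsupp ⟨i, (t i y).2⟩

/-- If `f : Y → X` is a covering map all of whose fibers are finite and `X` is
metrizable, then `Y` is metrizable. -/
theorem metrizableSpace_of_finite_coveringMap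
    {X Y : Type*} [TopologicalSpace X] [TopologicalSpace Y]
    (f : Y → X) (hf : IsCoveringMap f) (hfin : ∀ x : X, (f ⁻¹' {x}).Finite)
    [TopologicalSpace.MetrizableSpace X] :
    TopologicalSpace.MetrizableSpace Y :=
  metrizableSpace_of_finite_coveringMap_general f hf
end
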